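/- arXiv:2404.12589 — 2 statements merged into one kernel-verified Lean document; each statement's English description precedes it below -/
import Mathlib

section
/- Let 𝒳 = 𝒳⁽¹⁾ × ⋯ × 𝒳⁽ᵈ⁾ be a finite product state space and let π = ⊗_{i=1}^d π⁽ⁱ⁾ be a strictly positive product distribution with π⁽ⁱ⁾ ∈ 𝒫(𝒳⁽ⁱ⁾). Suppose M ∈ ℒ(𝒳) is π-stationary and Lᵢ ∈ ℒ(𝒳⁽ⁱ⁾) is π⁽ⁱ⁾-stationary for each i. Then D_f^π(M ‖ ⊗_{i=1}^d Lᵢ) = D_f^π(M* ‖ ⊗_{i=1}^d Lᵢ*), where M* is the π-dual of M and Lᵢ* is the π⁽ⁱ⁾-dual of Lᵢ. In particular, if each Lᵢ is π⁽ⁱ⁾-reversible, then D_f^π(M ‖ ⊗_{i=1}^d Lᵢ) = D_f^π(M* ‖ ⊗_{i=1}^d Lᵢ). -/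
open Filter Finset
open scoped Classical

/-- `p` is a probability mass on the finite set `Y`. -/
def IsProbMass {Y : Type*} [Fintype Y] (p : Y → ℝ) : Prop :=
  (∀ x, 0 ≤ p x) ∧ ∑ x, p x = 1

/-- `M` is a transition matrix (row-stochastic matrix) on the finite set `Y`. -/
def IsTransMat {Y : Type*} [Fintype Y] (M : Y → Y → ℝ) : Prop :=
  (∀ x y, 0 ≤ M x y) ∧ ∀ x, ∑ y, M x y = 1

/-- The tensor product `⊗ᵢ Lᵢ` of transition matrices on a finite product space. -/
noncomputable def tensorMat {d : ℕ} {X : Fin d → Type*} (L : ∀ i, X i → X i → ℝ) :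
    (∀ i, X i) → (∀ i, X i) → ℝ :=
  fun x y => ∏ i, L i (x i) (y i)

/-- `f'(∞) := lim_{x→0⁺} x f(1/x)`, as an extended real (realized as a limsup). -/
noncomputable def fPrimeInf (f : ℝ → ℝ) : EReal :=
  Filter.limsup (fun x : ℝ => ((x * f (1 / x) : ℝ) : EReal)) (nhdsWithin 0 (Set.Ioi 0))

/-- The term `L(x,y)·f(M(x,y)/L(x,y))` with the conventions `0·f(0/0) := 0` and
`0·f(a/0) := a·f'(∞)` for `a > 0`. -/
noncomputable def fDivTerm (f : ℝ → ℝ) (m l : ℝ) : EReal :=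
  if l = 0 then (if m = 0 then 0 else (m : EReal) * fPrimeInf f)
  else ((l * f (m / l) : ℝ) : EReal)

/-- The `f`-divergence `D_f^π(M ‖ L)` between transition matrices, with the convention
`0·∞ := 0` (EReal multiplication). -/
noncomputable def fDiv {Y : Type*} [Fintype Y] (f : ℝ → ℝ) (π : Y → ℝ) (M L : Y → Y → ℝ) :
    EReal :=
  ∑ x, (π x : EReal) * ∑ y, fDivTerm f (M x y) (L x y)

/-- The `π`-dual (time reversal) `P*` of a transition matrix `P`. -/
noncomputable def timeRev {Y : Type*} (π : Y → ℝ) (M : Y → Y → ℝ) : Y → Y → ℝ :=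
  fun x y => π y * M y x / π x

/-- Multiplication on `EReal` is not distributive in general (`⊥ + ⊤ = ⊥`), but it is for a
finite nonnegative left factor. -/
lemma EReal.coe_mul_sum_of_nonneg {ι : Type*} (s : Finset ι) {c : ℝ} (hc : 0 ≤ c)
    (g : ι → EReal) : (c : EReal) * ∑ i ∈ s, g i = ∑ i ∈ s, (c : EReal) * g i :=
  let mulLeft : EReal →+ EReal :=
    { toFun := ((c : EReal) * ·)
      map_zero' := mul_zero _
      map_add' :=
        EReal.left_distrib_of_nonneg_of_ne_top (EReal.coe_nonneg.2 hc) (EReal.coe_ne_top c) }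
  map_sum mulLeft g s

lemma fDivTerm_mul_mul (f : ℝ → ℝ) {c : ℝ} (hc : c ≠ 0) (m l : ℝ) :
    fDivTerm f (c * m) (c * l) = (c : EReal) * fDivTerm f m l := by
  unfold fDivTerm
  by_cases hl : l = 0
  · by_cases hm : m = 0
    · simp [hl, hm]
    · rw [if_pos (by simp [hl]), if_pos hl, if_neg (mul_ne_zero hc hm), if_neg hm,
        EReal.coe_mul, mul_assoc]
  · rw [if_neg (mul_ne_zero hc hl), if_neg hl, mul_div_mul_left m l hc, ← EReal.coe_mul,
      mul_assoc]

lemma timeRev_apply_eq_div_mul {Y : Type*} (π : Y → ℝ) (M : Y → Y → ℝ) (x y : Y) :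
    timeRev π M x y = π y / π x * M y x := by
  unfold timeRev; ring

/-- Time reversal is the reindexing `(x, y) ↦ (y, x)` of the double sum defining `fDiv`, the
weight `π y / π x` being absorbed by the one-homogeneity of `fDivTerm`. -/
theorem fDiv_timeRev_timeRev {Y : Type*} [Fintype Y] (f : ℝ → ℝ) {π : Y → ℝ}
    (hπ : ∀ x, 0 < π x) (M L : Y → Y → ℝ) :
    fDiv f π (timeRev π M) (timeRev π L) = fDiv f π M L := by
  have hrow (x : Y) : (π x : EReal) * ∑ y, fDivTerm f (timeRev π M x y) (timeRev π L x y)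
      = ∑ y, (π y : EReal) * fDivTerm f (M y x) (L y x) := by
    rw [EReal.coe_mul_sum_of_nonneg _ (hπ x).le]
    refine Finset.sum_congr rfl fun y _ => ?_
    rw [timeRev_apply_eq_div_mul, timeRev_apply_eq_div_mul,
      fDivTerm_mul_mul f (div_pos (hπ y) (hπ x)).ne', ← mul_assoc, ← EReal.coe_mul,
      mul_div_cancel₀ _ (hπ x).ne']
  unfold fDiv
  simp only [hrow]
  rw [Finset.sum_comm]
  exact Finset.sum_congr rfl fun y _ => (EReal.coe_mul_sum_of_nonneg _ (hπ y).le _).symm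

theorem tensorMat_timeRev {d : ℕ} {X : Fin d → Type*} (πs : ∀ i, X i → ℝ)
    (L : ∀ i, X i → X i → ℝ) :
    tensorMat (fun i => timeRev (πs i) (L i)) =
      timeRev (fun x : ∀ i, X i => ∏ i, πs i (x i)) (tensorMat L) := by
  funext x y
  simp only [tensorMat, timeRev, Finset.prod_div_distrib, Finset.prod_mul_distrib]

theorem timeRev_eq_self_of_reversible {Y : Type*} {π : Y → ℝ} (hπ : ∀ x, π x ≠ 0)
    {L : Y → Y → ℝ} (hrev : ∀ x y, π x * L x y = π y * L y x) : timeRev π L = L := by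
  funext x y
  rw [timeRev, ← hrev, mul_div_cancel_left₀ _ (hπ x)]

theorem stmt4_general {d : ℕ} {X : Fin d → Type*} [∀ i, Fintype (X i)]
    (f : ℝ → ℝ)
    (πs : ∀ i, X i → ℝ) (hpos : ∀ i xi, 0 < πs i xi)
    (M : (∀ i, X i) → (∀ i, X i) → ℝ)
    (L : ∀ i, X i → X i → ℝ) :
    fDiv f (fun x : ∀ i, X i => ∏ i, πs i (x i)) M (tensorMat L) =
        fDiv f (fun x : ∀ i, X i => ∏ i, πs i (x i))
          (timeRev (fun x : ∀ i, X i => ∏ i, πs i (x i)) M)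
          (tensorMat fun i => timeRev (πs i) (L i)) ∧
      ((∀ i xi yi, πs i xi * L i xi yi = πs i yi * L i yi xi) →
        fDiv f (fun x : ∀ i, X i => ∏ i, πs i (x i)) M (tensorMat L) =
          fDiv f (fun x : ∀ i, X i => ∏ i, πs i (x i))
            (timeRev (fun x : ∀ i, X i => ∏ i, πs i (x i)) M) (tensorMat L)) := by
  have hπ (x : ∀ i, X i) : 0 < ∏ i, πs i (x i) := Finset.prod_pos fun i _ => hpos i (x i)
  have hdual := tensorMat_timeRev πs L ▸ (fDiv_timeRev_timeRev f hπ M (tensorMat L)).symm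
  refine ⟨hdual, fun hrev => ?_⟩
  rwa [funext fun i => timeRev_eq_self_of_reversible (fun xi => (hpos i xi).ne') (hrev i)]
    at hdual

/-- Bisection property: for a `π`-stationary `M` (with `π` a strictly positive product
distribution) and `π⁽ⁱ⁾`-stationary `Lᵢ`, the `f`-divergence is invariant under taking
time reversals of both arguments; if moreover each `Lᵢ` is `π⁽ⁱ⁾`-reversible, one may
reverse only the first argument. -/
theorem stmt4 {d : ℕ} {X : Fin d → Type*} [∀ i, Fintype (X i)]
    (f : ℝ → ℝ) (hconv : ConvexOn ℝ (Set.Ioi (0 : ℝ)) f) (hf1 : f 1 = 0)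
    (πs : ∀ i, X i → ℝ) (hπs : ∀ i, IsProbMass (πs i)) (hpos : ∀ i xi, 0 < πs i xi)
    (M : (∀ i, X i) → (∀ i, X i) → ℝ) (hM : IsTransMat M)
    (hMstat : ∀ y, ∑ x : ∀ i, X i, (∏ i, πs i (x i)) * M x y = ∏ i, πs i (y i))
    (L : ∀ i, X i → X i → ℝ) (hL : ∀ i, IsTransMat (L i))
    (hLstat : ∀ i yi, ∑ xi, πs i xi * L i xi yi = πs i yi) :
    fDiv f (fun x : ∀ i, X i => ∏ i, πs i (x i)) M (tensorMat L) =
        fDiv f (fun x : ∀ i, X i => ∏ i, πs i (x i))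
          (timeRev (fun x : ∀ i, X i => ∏ i, πs i (x i)) M)
          (tensorMat fun i => timeRev (πs i) (L i)) ∧
      ((∀ i xi yi, πs i xi * L i xi yi = πs i yi * L i yi xi) →
        fDiv f (fun x : ∀ i, X i => ∏ i, πs i (x i)) M (tensorMat L) =
          fDiv f (fun x : ∀ i, X i => ∏ i, πs i (x i))
            (timeRev (fun x : ∀ i, X i => ∏ i, πs i (x i)) M) (tensorMat L)) :=
  stmt4_general f πs hpos M L
end

section
/- Let 𝒳 = 𝒳⁽¹⁾ × ⋯ × 𝒳⁽ᵈ⁾ be a finite product state space, let π ∈ 𝒫(𝒳) be strictly positive, P ∈ ℒ(𝒳) and Lᵢ ∈ ℒ(𝒳⁽ⁱ⁾) for i = 1,…,d. Then the Pythagorean identity holds: D_KL^π(P ‖ ⊗_{i=1}^d Lᵢ) = D_KL^π(P ‖ ⊗_{i=1}^d P_π⁽ⁱ⁾) + Σ_{i=1}^d D_KL^{π⁽ⁱ⁾}(P_π⁽ⁱ⁾ ‖ Lᵢ), where both sides may be +∞. Consequently ⊗_{i=1}^d P_π⁽ⁱ⁾ is the unique minimizer of (L₁,…,L_d) ↦ D_KL^π(P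 ‖ ⊗_{i=1}^d Lᵢ), and 𝕀^π(P) = D_KL^π(P ‖ ⊗_{i=1}^d P_π⁽ⁱ⁾). -/
/-!
Since `log (⊗ᵢ Lᵢ) = ∑ᵢ log Lᵢ`, on the support of `P` the difference
`log (P / ⊗ᵢ Lᵢ) - log (P / ⊗ᵢ P_π⁽ⁱ⁾)` is `∑ᵢ log (P_π⁽ⁱ⁾ / Lᵢ)`, a sum of functions each
depending on one coordinate pair `(xⁱ, yⁱ)` only. Averaging such a function against
`π(x) P(x, y)` is the same as averaging it against `π⁽ⁱ⁾(xⁱ) P_π⁽ⁱ⁾(xⁱ, yⁱ)`, which yields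
`∑ᵢ D_KL^{π⁽ⁱ⁾}(P_π⁽ⁱ⁾ ‖ Lᵢ)`. When some `P_π⁽ⁱ⁾` charges a transition that `Lᵢ` forbids, so does
`P` for `⊗ᵢ Lᵢ`, and both sides are `+∞`. Minimality and uniqueness of the minimizer then follow
from Gibbs' inequality, read off from `m log (m / l) = m - l + l · klFun (m / l)` with
`klFun ≥ 0` vanishing only at `1`.
-/

open Filter Finset
open scoped Classical

/-- The term `M(x,y)·ln(M(x,y)/L(x,y))` with the conventions `0·ln(0/·) := 0` and
`a·ln(a/0) := +∞` for `a > 0`. -/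
noncomputable def klTerm (m l : ℝ) : EReal :=
  if m = 0 then 0 else if l = 0 then ⊤ else ((m * Real.log (m / l) : ℝ) : EReal)

/-- The KL divergence `D_KL^π(M ‖ L)` between transition matrices, with the convention
`0·∞ := 0` (EReal multiplication). -/
noncomputable def klDiv {Y : Type*} [Fintype Y] (π : Y → ℝ) (M L : Y → Y → ℝ) : EReal :=
  ∑ x, (π x : EReal) * ∑ y, klTerm (M x y) (L x y)

/-- The `i`-th marginal `π⁽ⁱ⁾` of a probability mass `π` on a finite product space. -/
noncomputable def margDist {d : ℕ} {X : Fin d → Type*} [∀ i, Fintype (X i)]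
    (π : (∀ i, X i) → ℝ) (i : Fin d) : X i → ℝ :=
  fun xi => ∑ x : ∀ j, X j, if x i = xi then π x else 0

/-- The `i`-th marginal transition matrix `P_π⁽ⁱ⁾` of `P` with respect to `π`. -/
noncomputable def margKer {d : ℕ} {X : Fin d → Type*} [∀ i, Fintype (X i)]
    (π : (∀ i, X i) → ℝ) (P : (∀ i, X i) → (∀ i, X i) → ℝ) (i : Fin d) : X i → X i → ℝ :=
  fun xi yi =>
    (∑ x : ∀ j, X j, ∑ y : ∀ j, X j, if x i = xi ∧ y i = yi then π x * P x y else 0) /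
      margDist π i xi

/-- The distance to independence `𝕀^π(P)` with respect to the KL divergence. -/
noncomputable def distIndepKL {d : ℕ} {X : Fin d → Type*} [∀ i, Fintype (X i)]
    (π : (∀ i, X i) → ℝ) (P : (∀ i, X i) → (∀ i, X i) → ℝ) : EReal :=
  ⨅ (L : ∀ i, X i → X i → ℝ) (_ : ∀ i, IsTransMat (L i)), klDiv π P (tensorMat L)


namespace EReal

lemma coe_finset_sum {α : Type*} (s : Finset α) (f : α → ℝ) :
    ((∑ a ∈ s, f a : ℝ) : EReal) = ∑ a ∈ s, (f a : EReal) :=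
  map_sum (⟨⟨Real.toEReal, coe_zero⟩, coe_add⟩ : ℝ →+ EReal) f s

lemma finset_sum_ne_bot {α : Type*} {s : Finset α} {f : α → EReal} (h : ∀ a ∈ s, f a ≠ ⊥) :
    ∑ a ∈ s, f a ≠ ⊥ :=
  Finset.sum_induction f (· ≠ ⊥) (fun _ _ ha hb => by simp [add_eq_bot_iff, ha, hb])
    zero_ne_bot h

lemma finset_sum_eq_top {α : Type*} {s : Finset α} {f : α → EReal} (h : ∀ a ∈ s, f a ≠ ⊥)
    {a : α} (ha : a ∈ s) (htop : f a = ⊤) : ∑ b ∈ s, f b = ⊤ := by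
  rw [← Finset.add_sum_erase s f ha, htop]
  exact top_add_of_ne_bot (finset_sum_ne_bot fun b hb => h b (Finset.mem_of_mem_erase hb))

lemma coe_mul_ne_bot {c : ℝ} (hc : 0 ≤ c) {x : EReal} (hx : x ≠ ⊥) : (c : EReal) * x ≠ ⊥ := by
  induction x with
  | bot => exact absurd rfl hx
  | coe r => exact (coe_mul c r ▸ coe_ne_bot _)
  | top =>
    rcases hc.eq_or_lt with rfl | hc
    · simp
    · simp [coe_mul_top_of_pos hc]

lemma eq_zero_of_coe_add_eq {r : ℝ} {s : EReal} (h : (r : EReal) + s = r) : s = 0 := by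
  induction s <;> simp_all [← coe_add]

end EReal

section Gibbs

open InformationTheory

lemma mul_log_div_eq_sub_add_mul_klFun {m l : ℝ} (hl : l ≠ 0) :
    m * Real.log (m / l) = m - l + l * klFun (m / l) := by
  rw [klFun_apply]
  field_simp
  ring

lemma sub_le_mul_log_div {m l : ℝ} (hm : 0 ≤ m) (hl : 0 ≤ l) (habs : l = 0 → m = 0) :
    m - l ≤ m * Real.log (m / l) := by
  rcases hl.eq_or_lt with rfl | hl
  · simp [habs rfl]
  · rw [mul_log_div_eq_sub_add_mul_klFun hl.ne']
    have := klFun_nonneg (div_nonneg hm hl.le)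
    nlinarith

lemma eq_of_mul_log_div_eq_sub {m l : ℝ} (hm : 0 ≤ m) (hl : 0 ≤ l) (habs : l = 0 → m = 0)
    (h : m * Real.log (m / l) = m - l) : m = l := by
  rcases hl.eq_or_lt with rfl | hl
  · exact habs rfl
  · rw [mul_log_div_eq_sub_add_mul_klFun hl.ne', add_eq_left,
      mul_eq_zero, klFun_eq_zero_iff (div_nonneg hm hl.le)] at h
    rcases h with h | h
    · exact absurd h hl.ne'
    · exact (div_eq_one_iff_eq hl.ne').1 h

variable {Y : Type*} [Fintype Y] {m l : Y → ℝ}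

lemma sum_sub_le_sum_mul_log_div (hm : ∀ y, 0 ≤ m y) (hl : ∀ y, 0 ≤ l y)
    (habs : ∀ y, l y = 0 → m y = 0) :
    ∑ y, (m y - l y) ≤ ∑ y, m y * Real.log (m y / l y) :=
  Finset.sum_le_sum fun y _ => sub_le_mul_log_div (hm y) (hl y) (habs y)

lemma sum_mul_log_div_nonneg (hm : ∀ y, 0 ≤ m y) (hl : ∀ y, 0 ≤ l y)
    (hsum : ∑ y, l y ≤ ∑ y, m y) (habs : ∀ y, l y = 0 → m y = 0) :
    0 ≤ ∑ y, m y * Real.log (m y / l y) := by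
  have := sum_sub_le_sum_mul_log_div hm hl habs
  rw [Finset.sum_sub_distrib] at this
  linarith

lemma eq_of_sum_mul_log_div_eq_zero (hm : ∀ y, 0 ≤ m y) (hl : ∀ y, 0 ≤ l y)
    (hsum : ∑ y, l y ≤ ∑ y, m y) (habs : ∀ y, l y = 0 → m y = 0)
    (h : ∑ y, m y * Real.log (m y / l y) = 0) : m = l := by
  have hle := sum_sub_le_sum_mul_log_div hm hl habs
  have hsub : ∑ y, (m y - l y) = ∑ y, m y * Real.log (m y / l y) := by
    rw [Finset.sum_sub_distrib] at hle ⊢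
    linarith
  have hterm := (Finset.sum_eq_sum_iff_of_le fun y _ =>
    sub_le_mul_log_div (hm y) (hl y) (habs y)).1 hsub
  funext y
  exact eq_of_mul_log_div_eq_sub (hm y) (hl y) (habs y) (hterm y (Finset.mem_univ y)).symm

end Gibbs

section KL

lemma klTerm_ne_bot (m l : ℝ) : klTerm m l ≠ ⊥ := by
  unfold klTerm
  split_ifs <;> simp [-EReal.coe_mul]

lemma klTerm_eq_coe {m l : ℝ} (habs : l = 0 → m = 0) :
    klTerm m l = ((m * Real.log (m / l) : ℝ) : EReal) := by
  unfold klTerm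
  split_ifs with hm hl
  · simp [hm]
  · exact absurd (habs hl) hm
  · rfl

variable {Y : Type*} [Fintype Y]

lemma sum_klTerm_eq_coe {m l : Y → ℝ} (habs : ∀ y, l y = 0 → m y = 0) :
    ∑ y, klTerm (m y) (l y) = ((∑ y, m y * Real.log (m y / l y) : ℝ) : EReal) := by
  rw [EReal.coe_finset_sum]
  exact Finset.sum_congr rfl fun y _ => klTerm_eq_coe (habs y)

lemma sum_klTerm_eq_top {m l : Y → ℝ} {z : Y} (hm : m z ≠ 0) (hl : l z = 0) :
    ∑ y, klTerm (m y) (l y) = ⊤ :=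
  EReal.finset_sum_eq_top (fun _ _ => klTerm_ne_bot _ _) (Finset.mem_univ z)
    (by simp [klTerm, hm, hl])

lemma sum_klTerm_ne_top_iff {m l : Y → ℝ} :
    ∑ y, klTerm (m y) (l y) ≠ ⊤ ↔ ∀ y, l y = 0 → m y = 0 := by
  refine ⟨fun h y hl => by_contra fun hm => h (sum_klTerm_eq_top hm hl), fun habs => ?_⟩
  rw [sum_klTerm_eq_coe habs]
  exact EReal.coe_ne_top _

lemma sum_klTerm_nonneg {m l : Y → ℝ} (hm : ∀ y, 0 ≤ m y) (hl : ∀ y, 0 ≤ l y)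
    (hsum : ∑ y, l y ≤ ∑ y, m y) : 0 ≤ ∑ y, klTerm (m y) (l y) := by
  by_cases habs : ∀ y, l y = 0 → m y = 0
  · rw [sum_klTerm_eq_coe habs]
    exact EReal.coe_nonneg.2 (sum_mul_log_div_nonneg hm hl hsum habs)
  · rw [← sum_klTerm_ne_top_iff, not_not] at habs
    simp [habs]

lemma eq_of_sum_klTerm_eq_zero {m l : Y → ℝ} (hm : ∀ y, 0 ≤ m y) (hl : ∀ y, 0 ≤ l y)
    (hsum : ∑ y, l y ≤ ∑ y, m y) (h : ∑ y, klTerm (m y) (l y) = 0) : m = l := by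
  have habs := sum_klTerm_ne_top_iff.1 (h ▸ EReal.zero_ne_top)
  rw [sum_klTerm_eq_coe habs, EReal.coe_eq_zero] at h
  exact eq_of_sum_mul_log_div_eq_zero hm hl hsum habs h

variable {π : Y → ℝ} {M L : Y → Y → ℝ}

lemma klDiv_ne_bot (hπ : ∀ x, 0 ≤ π x) (M L : Y → Y → ℝ) : klDiv π M L ≠ ⊥ :=
  EReal.finset_sum_ne_bot fun x _ =>
    EReal.coe_mul_ne_bot (hπ x) (EReal.finset_sum_ne_bot fun _ _ => klTerm_ne_bot _ _)

lemma klDiv_eq_coe (habs : ∀ x y, L x y = 0 → M x y = 0) :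
    klDiv π M L = ((∑ x, π x * ∑ y, M x y * Real.log (M x y / L x y) : ℝ) : EReal) := by
  rw [EReal.coe_finset_sum]
  refine Finset.sum_congr rfl fun x _ => ?_
  rw [EReal.coe_mul, sum_klTerm_eq_coe (habs x)]

lemma klDiv_eq_top (hπ : ∀ x, 0 < π x) {x y : Y} (hM : M x y ≠ 0) (hL : L x y = 0) :
    klDiv π M L = ⊤ :=
  EReal.finset_sum_eq_top
    (fun x' _ => EReal.coe_mul_ne_bot (hπ x').le
      (EReal.finset_sum_ne_bot fun _ _ => klTerm_ne_bot _ _))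
    (Finset.mem_univ x) (by rw [sum_klTerm_eq_top hM hL, EReal.coe_mul_top_of_pos (hπ x)])

lemma klDiv_nonneg (hπ : ∀ x, 0 ≤ π x) (hM : IsTransMat M) (hL : IsTransMat L) :
    0 ≤ klDiv π M L :=
  Finset.sum_nonneg fun x _ => EReal.mul_nonneg (EReal.coe_nonneg.2 (hπ x))
    (sum_klTerm_nonneg (hM.1 x) (hL.1 x) (by rw [hM.2 x, hL.2 x]))

lemma eq_of_klDiv_eq_zero (hπ : ∀ x, 0 < π x) (hM : IsTransMat M) (hL : IsTransMat L)
    (h : klDiv π M L = 0) : M = L := by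
  have hrows := (Finset.sum_eq_zero_iff_of_nonneg fun x _ =>
    EReal.mul_nonneg (EReal.coe_nonneg.2 (hπ x).le)
      (sum_klTerm_nonneg (hM.1 x) (hL.1 x) (by rw [hM.2 x, hL.2 x]))).1 h
  funext x
  refine eq_of_sum_klTerm_eq_zero (hM.1 x) (hL.1 x) (by rw [hM.2 x, hL.2 x]) ?_
  exact (mul_eq_zero.1 (hrows x (Finset.mem_univ x))).resolve_left
    (EReal.coe_ne_zero.2 (hπ x).ne')

end KL

lemma sum_sum_fiber_mul {α β : Type*} [Fintype α] [Fintype β] (f : α → α → ℝ) (p : α → β)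
    (g : β → β → ℝ) :
    ∑ b, ∑ c, (∑ x, ∑ y, if p x = b ∧ p y = c then f x y else 0) * g b c
      = ∑ x, ∑ y, f x y * g (p x) (p y) := by
  simp only [Finset.sum_mul, ite_mul, zero_mul]
  rw [Finset.sum_comm_cycle]
  refine Finset.sum_congr rfl fun x _ => ?_
  rw [Finset.sum_comm_cycle]
  refine Finset.sum_congr rfl fun y _ => ?_
  simp [ite_and]

section Marginal

variable {d : ℕ} {X : Fin d → Type*} [∀ i, Fintype (X i)]
  {π : (∀ i, X i) → ℝ} {P : (∀ i, X i) → (∀ i, X i) → ℝ}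

lemma margDist_pos [Nonempty (∀ j, X j)] (hπ : ∀ x, 0 < π x) (i : Fin d) (xi : X i) :
    0 < margDist π i xi := by
  obtain ⟨x⟩ := ‹Nonempty (∀ j, X j)›
  refine (hπ (Function.update x i xi)).trans_le ?_
  simpa [margDist] using Finset.single_le_sum (f := fun x : ∀ j, X j => if x i = xi then π x else 0)
    (fun x _ => by split_ifs <;> simp [(hπ x).le]) (Finset.mem_univ (Function.update x i xi))

lemma margKer_nonneg (hπ : ∀ x, 0 ≤ π x) (hP : ∀ x y, 0 ≤ P x y) (i : Fin d) (xi yi : X i) :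
    0 ≤ margKer π P i xi yi :=
  div_nonneg (Finset.sum_nonneg fun x _ => Finset.sum_nonneg fun y _ =>
      ite_nonneg (mul_nonneg (hπ x) (hP x y)) le_rfl)
    (Finset.sum_nonneg fun x _ => ite_nonneg (hπ x) le_rfl)

lemma margDist_mul_margKer [Nonempty (∀ j, X j)] (hπ : ∀ x, 0 < π x) (i : Fin d)
    (xi yi : X i) :
    margDist π i xi * margKer π P i xi yi =
      ∑ x, ∑ y, if x i = xi ∧ y i = yi then π x * P x y else 0 :=
  mul_div_cancel₀ _ (margDist_pos hπ i xi).ne'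

lemma sum_sum_mul_comp_eval [Nonempty (∀ j, X j)] (hπ : ∀ x, 0 < π x) (i : Fin d)
    (g : X i → X i → ℝ) :
    ∑ x, ∑ y, π x * P x y * g (x i) (y i) =
      ∑ xi, margDist π i xi * ∑ yi, margKer π P i xi yi * g xi yi := by
  simp only [Finset.mul_sum, ← mul_assoc, margDist_mul_margKer hπ]
  exact (sum_sum_fiber_mul (fun x y => π x * P x y) (fun x => x i) g).symm

lemma sum_margKer [Nonempty (∀ j, X j)] (hπ : ∀ x, 0 < π x) (hP : ∀ x, ∑ y, P x y = 1)
    (i : Fin d) (xi : X i) : ∑ yi, margKer π P i xi yi = 1 := by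
  have hmass : margDist π i xi * ∑ yi, margKer π P i xi yi = margDist π i xi :=
    calc margDist π i xi * ∑ yi, margKer π P i xi yi
        = ∑ a, margDist π i a * ∑ yi, margKer π P i a yi * if a = xi then 1 else 0 := by
          simp
      _ = ∑ x, ∑ y, π x * P x y * if x i = xi then 1 else 0 :=
          (sum_sum_mul_comp_eval hπ i fun a _ => if a = xi then 1 else 0).symm
      _ = margDist π i xi := by
          simp [margDist, ← Finset.mul_sum, hP]
  exact (mul_eq_left₀ (margDist_pos hπ i xi).ne').1 hmass

lemma margKer_isTransMat [Nonempty (∀ j, X j)] (hπ : ∀ x, 0 < π x) (hP : IsTransMat P)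
    (i : Fin d) : IsTransMat (margKer π P i) :=
  ⟨margKer_nonneg (fun x => (hπ x).le) hP.1 i, sum_margKer hπ hP.2 i⟩

lemma margKer_pos [Nonempty (∀ j, X j)] (hπ : ∀ x, 0 < π x) (hP : ∀ x y, 0 ≤ P x y)
    (i : Fin d) {x y : ∀ j, X j} (hxy : P x y ≠ 0) : 0 < margKer π P i (x i) (y i) := by
  have hterm (x' y' : ∀ j, X j) :
      0 ≤ if x' i = x i ∧ y' i = y i then π x' * P x' y' else 0 :=
    ite_nonneg (mul_nonneg (hπ x').le (hP x' y')) le_rfl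
  have hnum : 0 < ∑ x', ∑ y', if x' i = x i ∧ y' i = y i then π x' * P x' y' else 0 :=
    Finset.sum_pos' (fun x' _ => Finset.sum_nonneg fun y' _ => hterm x' y')
      ⟨x, Finset.mem_univ x, Finset.sum_pos' (fun y' _ => hterm x y')
        ⟨y, Finset.mem_univ y, by simpa using mul_pos (hπ x) ((hP x y).lt_of_ne' hxy)⟩⟩
  rw [← margDist_mul_margKer hπ] at hnum
  exact pos_of_mul_pos_right hnum (margDist_pos hπ i (x i)).le

lemma exists_ne_zero_of_margKer_ne_zero {i : Fin d} {xi yi : X i}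
    (h : margKer π P i xi yi ≠ 0) : ∃ x y : ∀ j, X j, x i = xi ∧ y i = yi ∧ P x y ≠ 0 := by
  by_contra! hc
  refine h (div_eq_zero_iff.2 (Or.inl (Finset.sum_eq_zero fun x _ =>
    Finset.sum_eq_zero fun y _ => ?_)))
  split_ifs with hxy
  · rw [hc x y hxy.1 hxy.2, mul_zero]
  · rfl

end Marginal

lemma IsProbMass.nonempty {Y : Type*} [Fintype Y] {p : Y → ℝ} (hp : IsProbMass p) :
    Nonempty Y := by
  by_contra h
  rw [not_nonempty_iff] at h
  simpa using hp.2

lemma log_div_tensorMat {d : ℕ} {X : Fin d → Type*} {L Q : ∀ i, X i → X i → ℝ}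
    {x y : ∀ i, X i} {p : ℝ} (hp : p ≠ 0) (hQ : ∀ i, Q i (x i) (y i) ≠ 0)
    (hL : ∀ i, L i (x i) (y i) ≠ 0) :
    Real.log (p / tensorMat L x y) =
      Real.log (p / tensorMat Q x y) + ∑ i, Real.log (Q i (x i) (y i) / L i (x i) (y i)) := by
  unfold tensorMat
  rw [Real.log_div hp (Finset.prod_ne_zero_iff.2 fun i _ => hL i),
    Real.log_div hp (Finset.prod_ne_zero_iff.2 fun i _ => hQ i),
    Real.log_prod fun i _ => hL i, Real.log_prod fun i _ => hQ i]
  simp only [Real.log_div (hQ _) (hL _), Finset.sum_sub_distrib]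
  ring

section Pythagoras

variable {d : ℕ} {X : Fin d → Type*} [∀ i, Fintype (X i)] [Nonempty (∀ j, X j)]
  {π : (∀ i, X i) → ℝ} {P : (∀ i, X i) → (∀ i, X i) → ℝ}

lemma tensorMat_margKer_ne_zero (hπ : ∀ x, 0 < π x) (hP : ∀ x y, 0 ≤ P x y)
    {x y : ∀ j, X j} (hxy : P x y ≠ 0) : tensorMat (fun i => margKer π P i) x y ≠ 0 :=
  Finset.prod_ne_zero_iff.2 fun i _ => (margKer_pos hπ hP i hxy).ne'

lemma sum_mul_log_div_tensorMat (hπ : ∀ x, 0 < π x) (hP : ∀ x y, 0 ≤ P x y)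
    (L : ∀ i, X i → X i → ℝ) (habs : ∀ i xi yi, L i xi yi = 0 → margKer π P i xi yi = 0) :
    ∑ x, π x * ∑ y, P x y * Real.log (P x y / tensorMat L x y) =
      ∑ x, π x * ∑ y, P x y * Real.log (P x y / tensorMat (fun i => margKer π P i) x y) +
        ∑ i, ∑ xi, margDist π i xi *
          ∑ yi, margKer π P i xi yi * Real.log (margKer π P i xi yi / L i xi yi) := by
  have hpoint (x y : ∀ j, X j) :
      P x y * Real.log (P x y / tensorMat L x y) =
        P x y * Real.log (P x y / tensorMat (fun i => margKer π P i) x y) +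
          ∑ i, P x y * Real.log (margKer π P i (x i) (y i) / L i (x i) (y i)) := by
    rcases eq_or_ne (P x y) 0 with hxy | hxy
    · simp [hxy]
    have hQ i := (margKer_pos hπ hP i hxy).ne'
    rw [log_div_tensorMat hxy hQ fun i => mt (habs i _ _) (hQ i), mul_add, Finset.mul_sum]
  simp only [hpoint, Finset.sum_add_distrib, mul_add]
  congr 1
  calc ∑ x, π x * ∑ y, ∑ i, P x y * Real.log (margKer π P i (x i) (y i) / L i (x i) (y i))
      = ∑ i, ∑ x, ∑ y, π x * P x y *
          Real.log (margKer π P i (x i) (y i) / L i (x i) (y i)) := by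
        simp only [Finset.mul_sum, ← mul_assoc]
        exact Finset.sum_comm_cycle
    _ = _ := Finset.sum_congr rfl fun i _ => sum_sum_mul_comp_eval hπ i
          fun xi yi => Real.log (margKer π P i xi yi / L i xi yi)

theorem klDiv_tensorMat_eq_add (hπ : ∀ x, 0 < π x) (hP : ∀ x y, 0 ≤ P x y)
    (L : ∀ i, X i → X i → ℝ) :
    klDiv π P (tensorMat L) =
      klDiv π P (tensorMat fun i => margKer π P i) +
        ∑ i, klDiv (margDist π i) (margKer π P i) (L i) := by
  by_cases habs : ∀ i xi yi, L i xi yi = 0 → margKer π P i xi yi = 0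
  · have habsL (x y : ∀ j, X j) (hL : tensorMat L x y = 0) : P x y = 0 := by
      by_contra hxy
      exact Finset.prod_ne_zero_iff.2 (fun i _ => mt (habs i _ _) (margKer_pos hπ hP i hxy).ne') hL
    rw [klDiv_eq_coe habsL, klDiv_eq_coe fun x y => not_imp_not.1 (tensorMat_margKer_ne_zero hπ hP),
      Finset.sum_congr rfl fun i _ => klDiv_eq_coe (habs i), ← EReal.coe_finset_sum,
      ← EReal.coe_add, sum_mul_log_div_tensorMat hπ hP L habs]
  · push Not at habs
    obtain ⟨i, xi, yi, hL, hQ⟩ := habs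
    obtain ⟨x, y, rfl, rfl, hxy⟩ := exists_ne_zero_of_margKer_ne_zero hQ
    rw [klDiv_eq_top hπ hxy (Finset.prod_eq_zero (Finset.mem_univ i) hL),
      EReal.finset_sum_eq_top (fun j _ => klDiv_ne_bot (fun _ => (margDist_pos hπ j _).le) _ _)
        (Finset.mem_univ i) (klDiv_eq_top (margDist_pos hπ i) hQ hL),
      EReal.add_top_of_ne_bot (klDiv_ne_bot (fun x => (hπ x).le) _ _)]

lemma klDiv_tensorMat_margKer_le (hπ : ∀ x, 0 < π x) (hP : IsTransMat P)
    (L : ∀ i, X i → X i → ℝ) (hL : ∀ i, IsTransMat (L i)) :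
    klDiv π P (tensorMat fun i => margKer π P i) ≤ klDiv π P (tensorMat L) := by
  rw [klDiv_tensorMat_eq_add hπ hP.1 L]
  exact le_add_of_nonneg_right (Finset.sum_nonneg fun i _ =>
    klDiv_nonneg (fun _ => (margDist_pos hπ i _).le) (margKer_isTransMat hπ hP i) (hL i))

lemma eq_margKer_of_klDiv_tensorMat_eq (hπ : ∀ x, 0 < π x) (hP : IsTransMat P)
    (L : ∀ i, X i → X i → ℝ) (hL : ∀ i, IsTransMat (L i))
    (h : klDiv π P (tensorMat L) = klDiv π P (tensorMat fun i => margKer π P i)) :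
    L = fun i => margKer π P i := by
  rw [klDiv_tensorMat_eq_add hπ hP.1 L,
    klDiv_eq_coe fun x y => not_imp_not.1 (tensorMat_margKer_ne_zero hπ hP.1)] at h
  have hsum := (Finset.sum_eq_zero_iff_of_nonneg fun i _ =>
    klDiv_nonneg (fun _ => (margDist_pos hπ i _).le) (margKer_isTransMat hπ hP i) (hL i)).1
    (EReal.eq_zero_of_coe_add_eq h)
  funext i
  exact (eq_of_klDiv_eq_zero (margDist_pos hπ i) (margKer_isTransMat hπ hP i) (hL i)
    (hsum i (Finset.mem_univ i))).symm

lemma distIndepKL_eq (hπ : ∀ x, 0 < π x) (hP : IsTransMat P) :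
    distIndepKL π P = klDiv π P (tensorMat fun i => margKer π P i) :=
  le_antisymm (iInf₂_le _ (margKer_isTransMat hπ hP))
    (le_iInf₂ fun L hL => klDiv_tensorMat_margKer_le hπ hP L hL)

end Pythagoras

/-- Pythagorean identity for the KL divergence: `D_KL^π(P ‖ ⊗ᵢ Lᵢ)` decomposes as the
divergence to the tensor product of the marginal transition matrices plus the sum of the
marginal divergences; consequently `⊗ᵢ P_π⁽ⁱ⁾` is the unique minimizer and
`𝕀^π(P) = D_KL^π(P ‖ ⊗ᵢ P_π⁽ⁱ⁾)`. -/
theorem stmt6 {d : ℕ} {X : Fin d → Type*} [∀ i, Fintype (X i)]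
    (π : (∀ i, X i) → ℝ) (hπ : IsProbMass π) (hpos : ∀ x, 0 < π x)
    (P : (∀ i, X i) → (∀ i, X i) → ℝ) (hP : IsTransMat P)
    (L : ∀ i, X i → X i → ℝ) (hL : ∀ i, IsTransMat (L i)) :
    klDiv π P (tensorMat L) =
        klDiv π P (tensorMat fun i => margKer π P i) +
          ∑ i, klDiv (margDist π i) (margKer π P i) (L i) ∧
      klDiv π P (tensorMat fun i => margKer π P i) ≤ klDiv π P (tensorMat L) ∧
      (klDiv π P (tensorMat L) = klDiv π P (tensorMat fun i => margKer π P i) →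
        L = fun i => margKer π P i) ∧
      distIndepKL π P = klDiv π P (tensorMat fun i => margKer π P i) := by
  have := hπ.nonempty
  exact ⟨klDiv_tensorMat_eq_add hpos hP.1 L, klDiv_tensorMat_margKer_le hpos hP L hL,
    eq_margKer_of_klDiv_tensorMat_eq hpos hP L hL, distIndepKL_eq hpos hP⟩
end
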